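/- (PER identity) Let θ, θ' be i.i.d. real random variables with common continuous distribution F, and let V_α = P(θ ≥ F⁻¹(1−α) | D) for a conditioning σ-algebra (or data D). Then P(θ ≤ θ' | D) = 1 − ∫₀¹ V_α dα, where θ' is independent of (θ, D). -/

import Mathlib

/-! By the layer-cake formula, `∫ F dν = ∫₀¹ ν {F ≥ s} ds`. Substituting `s = 1 - α` and using the
Galois connection between `F` and `Finv` rewrites `{F ≥ 1 - α}` as `{t ≥ Finv (1 - α)}`. -/

open MeasureTheory Set

theorem setIntegral_Ioo_comp_add_sub (g : ℝ → ℝ) (a b : ℝ) :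
    ∫ x in Ioo a b, g (a + b - x) = ∫ x in Ioo a b, g x := by
  rcases le_total a b with hab | hba
  · simp only [← integral_Ioc_eq_integral_Ioo, ← intervalIntegral.integral_of_le hab,
      intervalIntegral.integral_comp_sub_left, add_sub_cancel_right, add_sub_cancel_left]
  · simp [Ioo_eq_empty_of_le hba]

theorem stmt5_general (ν : Measure ℝ) [IsProbabilityMeasure ν] (F Finv : ℝ → ℝ)
    (hFc : Continuous F)
    (hrange : ∀ t, F t ∈ Set.Icc (0 : ℝ) 1)
    (hgal : ∀ p ∈ Set.Ioo (0 : ℝ) 1, ∀ t, Finv p ≤ t ↔ p ≤ F t) :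
    ∫ t, (1 - F t) ∂ν
      = 1 - ∫ α in Set.Ioo (0 : ℝ) 1, (ν {t | Finv (1 - α) ≤ t}).toReal := by
  have hF_int : Integrable F ν := .of_bound hFc.aestronglyMeasurable 1 <| .of_forall fun t ↦ by
    rw [Real.norm_of_nonneg (hrange t).1]; exact (hrange t).2
  have hlayer_cake : ∫ t, F t ∂ν = ∫ s in Ioo 0 1, ν.real {t | s ≤ F t} := by
    rw [hF_int.integral_eq_integral_Ioc_meas_le (M := 1) (.of_forall fun t ↦ (hrange t).1)
      (.of_forall fun t ↦ (hrange t).2), integral_Ioc_eq_integral_Ioo]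
  have hquantile : ∫ α in Ioo 0 1, (ν {t | Finv (1 - α) ≤ t}).toReal
      = ∫ α in Ioo 0 1, ν.real {t | 1 - α ≤ F t} := by
    refine setIntegral_congr_fun measurableSet_Ioo fun α hα ↦ ?_
    have h1α : 1 - α ∈ Ioo (0 : ℝ) 1 := ⟨by linarith [hα.2], by linarith [hα.1]⟩
    simp only [measureReal_def, hgal _ h1α]
  have hreflect := setIntegral_Ioo_comp_add_sub (fun s ↦ ν.real {t | s ≤ F t}) 0 1
  rw [zero_add] at hreflect
  rw [integral_sub (integrable_const 1) hF_int, hlayer_cake, hquantile, hreflect]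
  simp

/-- PER identity: With `ν` the conditional law of `θ` given the data `D`,
`F` the common continuous strictly increasing CDF of `θ` and of the independent copy `θ'`
(with quantile function `Finv`), the posterior expected relative rank satisfies
`P(θ ≤ θ' | D) = ∫ (1 - F t) dν(t) = 1 - ∫₀¹ V_α dα`, where
`V_α = P(θ ≥ F⁻¹(1-α) | D) = ν {t : t ≥ Finv (1-α)}`. -/
theorem stmt5 (ν : Measure ℝ) [IsProbabilityMeasure ν] (F Finv : ℝ → ℝ)
    (hFc : Continuous F) (hFm : StrictMono F)
    (hrange : ∀ t, F t ∈ Set.Icc (0 : ℝ) 1)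
    (hgal : ∀ p ∈ Set.Ioo (0 : ℝ) 1, ∀ t, Finv p ≤ t ↔ p ≤ F t) :
    ∫ t, (1 - F t) ∂ν
      = 1 - ∫ α in Set.Ioo (0 : ℝ) 1, (ν {t | Finv (1 - α) ≤ t}).toReal :=
  stmt5_general ν F Finv hFc hrange hgal
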